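/- arXiv:1306.1935 — 2 statements merged into one kernel-verified Lean document; each statement's English description precedes it below -/
import Mathlib

section
/- Let λ be a finite nonzero cardinal, S a Hausdorff semitopological semigroup with zero, and τ_B a topology on B⁰_λ(S) making it a semitopological semigroup with τ_B restricted to S_{α,α} equal to the topology of S for some α. If A ⊆ S is open in S and 0_S ∉ A, then A_{β,γ} = {(β,s,γ) : s ∈ A} is open in (B⁰_λ(S), τ_B) for all β, γ ∈ λ; and if A ⊆ S is open and 0_S ∈ A, then ⋃_{β,γ∈λ} A_{β,γ} is open in (B⁰_λ(S), τ_B). -/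
open Topology Set Filter

/-- The underlying set of the Brandt `λ⁰`-extension `B⁰_λ(S)`:
nonzero elements are triples `(α, s, β)` with `s ≠ 0`, and `none` is the zero. -/
abbrev Brandt (S : Type*) [Zero S] (lam : Type*) : Type _ :=
  Option (lam × {s : S // s ≠ 0} × lam)

open Classical in
/-- Multiplication of the Brandt `λ⁰`-extension. -/
noncomputable def brandtMul {S : Type*} [MonoidWithZero S] {lam : Type*} :
    Brandt S lam → Brandt S lam → Brandt S lam
  | some (α, a, β), some (γ, b, δ) =>
      if h : β = γ ∧ a.1 * b.1 ≠ 0 then some (α, ⟨a.1 * b.1, h.2⟩, δ) else none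
  | _, _ => none

/-- The set `S*_{α,β}` of nonzero elements of the `(α,β)` sheet. -/
def sheet {S : Type*} [Zero S] {lam : Type*} (α β : lam) : Set (Brandt S lam) :=
  {x | ∃ s : {s : S // s ≠ 0}, x = some (α, s, β)}

/-- The sheet `S_{α,β} = S*_{α,β} ∪ {0}`. -/
def sheet0 {S : Type*} [Zero S] {lam : Type*} (α β : lam) : Set (Brandt S lam) :=
  sheet α β ∪ {none}

/-- The trace `(U)*_{α,β}` of a subset `U ⊆ S` on the `(α,β)` sheet (zero removed). -/
def sheetTrace {S : Type*} [Zero S] {lam : Type*} (α β : lam) (U : Set S) :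
    Set (Brandt S lam) :=
  {x | ∃ s : {s : S // s ≠ 0}, s.1 ∈ U ∧ x = some (α, s, β)}

/-- The basic neighbourhood `U_A(0)` of zero: all sheets outside the finite set `A`
together with the traces of `U` on the sheets from `A`. -/
def UA0 {S : Type*} [Zero S] {lam : Type*} (A : Set (lam × lam)) (U : Set S) :
    Set (Brandt S lam) :=
  {x | x = none ∨ ∃ (α β : lam) (s : {s : S // s ≠ 0}),
        x = some (α, s, β) ∧ ((α, β) ∉ A ∨ s.1 ∈ U)}

/-- The canonical topology `τ_B^S` on the Brandt `λ⁰`-extension, generated by the base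
consisting of traces of open subsets of `S` on the sheets and of the sets `U_A(0)`. -/
def brandtTop (S : Type*) [Zero S] [TopologicalSpace S] (lam : Type*) :
    TopologicalSpace (Brandt S lam) :=
  TopologicalSpace.generateFrom
    ({W | ∃ (α β : lam) (U : Set S), IsOpen U ∧ W = sheetTrace α β U} ∪
     {W | ∃ A : Set (lam × lam), A.Finite ∧
        ∃ U : Set S, IsOpen U ∧ (0 : S) ∈ U ∧ W = UA0 A U})

open Classical in
/-- The canonical copy of `S` as the sheet `S_{α,α}` inside `B⁰_λ(S)`. -/
noncomputable def brandtIncl {S : Type*} [Zero S] {lam : Type*} (α : lam) (s : S) :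
    Brandt S lam :=
  if h : s = 0 then none else some (α, ⟨s, h⟩, α)

/-- Separate continuity of a multiplication. -/
def SepCont {X : Type*} [TopologicalSpace X] (m : X → X → X) : Prop :=
  ∀ t : X, Continuous (m t) ∧ Continuous (fun x => m x t)

/-- A family of subsets is locally finite. -/
def SetLocallyFinite {X : Type*} [TopologicalSpace X] (F : Set (Set X)) : Prop :=
  ∀ x : X, ∃ U : Set X, x ∈ U ∧ IsOpen U ∧ {A ∈ F | (A ∩ U).Nonempty}.Finite

/-- `X` is pseudocompact: every locally finite family of nonempty open subsets is finite. -/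
def Pseudocompact (X : Type*) [TopologicalSpace X] : Prop :=
  ∀ F : Set (Set X), (∀ U ∈ F, IsOpen U ∧ U.Nonempty) → SetLocallyFinite F → F.Finite

/-- `X` is countably pracompact: there is a dense set `A` such that every infinite
subset of `A` has an accumulation point in `X`. -/
def CountablyPracompact (X : Type*) [TopologicalSpace X] : Prop :=
  ∃ A : Set X, Dense A ∧ ∀ B ⊆ A, B.Infinite → ∃ x : X, AccPt x (𝓟 B)

/-- `X` is countably compact: every countable open cover has a finite subcover. -/
def CountablyCompactSp (X : Type*) [TopologicalSpace X] : Prop :=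
  ∀ F : Set (Set X), F.Countable → (∀ U ∈ F, IsOpen U) → ⋃₀ F = univ →
    ∃ G ⊆ F, G.Finite ∧ ⋃₀ G = univ

/-!
Left multiplication by `(α, 1, β)` and right multiplication by `(γ, 1, δ)` map the sheet
`S*_{β,γ}` identically onto `S*_{α,δ}` and everything else to `0`; by separate continuity these
maps are continuous. So if `V` is open in `B⁰_λ(S)` with trace `A` on `S_{α,α}`, then the trace of
`A` on any sheet is a preimage of `V` when `0 ∉ V`, and `⋃_{β,γ} A_{β,γ}` is the finite
intersection of these preimages when `0 ∈ V`.
-/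

instance Brandt.instSubsingleton {S : Type*} [MonoidWithZero S] [Subsingleton S] (lam : Type*) :
    Subsingleton (Brandt S lam) :=
  ⟨fun
    | none, none => rfl
    | some (_, s, _), _ | _, some (_, s, _) => (s.2 (Subsingleton.elim _ _)).elim⟩

section Computations

variable {S : Type*} [MonoidWithZero S] {lam : Type*}

@[simp]
theorem brandtMul_none_left (x : Brandt S lam) : brandtMul none x = none :=
  rfl

open Classical in
theorem brandtMul_some_some (α β γ δ : lam) (a b : {s : S // s ≠ 0}) :
    brandtMul (some (α, a, β)) (some (γ, b, δ)) =
      if h : β = γ ∧ a.1 * b.1 ≠ 0 then some (α, ⟨a.1 * b.1, h.2⟩, δ) else none :=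
  rfl

theorem brandtIncl_zero (α : lam) : brandtIncl (S := S) α 0 = none := by
  simp [brandtIncl]

theorem brandtIncl_coe (α : lam) (s : {s : S // s ≠ 0}) :
    brandtIncl α s.1 = some (α, s, α) := by
  simp [brandtIncl, s.2]

end Computations

section Sandwich

variable {S : Type*} [MonoidWithZero S] [Nontrivial S] {lam : Type*}

noncomputable def brandtSandwich (α β γ δ : lam) (x : Brandt S lam) : Brandt S lam :=
  brandtMul (brandtMul (some (α, ⟨1, one_ne_zero⟩, β)) x) (some (γ, ⟨1, one_ne_zero⟩, δ))

theorem continuous_brandtSandwich [TopologicalSpace (Brandt S lam)]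
    (hsep : SepCont (brandtMul (S := S) (lam := lam))) (α β γ δ : lam) :
    Continuous (brandtSandwich (S := S) α β γ δ) :=
  (hsep _).2.comp (hsep _).1

theorem brandtSandwich_some (α β γ δ : lam) (s : {s : S // s ≠ 0}) :
    brandtSandwich α β γ δ (some (β, s, γ)) = some (α, s, δ) := by
  simp [brandtSandwich, brandtMul_some_some, s.2]

theorem brandtSandwich_of_ne (α δ : lam) {β γ : lam} {x : Brandt S lam}
    (hx : ∀ s : {s : S // s ≠ 0}, x ≠ some (β, s, γ)) :
    brandtSandwich α β γ δ x = none := by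
  rcases x with _ | ⟨β', s, γ'⟩
  · rfl
  · by_cases hβ : β = β'
    · subst hβ
      have hγ : γ' ≠ γ := by rintro rfl; exact hx s rfl
      simp [brandtSandwich, brandtMul_some_some, s.2, hγ]
    · simp [brandtSandwich, brandtMul_some_some, hβ]

theorem sheetTrace_preimage_brandtIncl (α β γ : lam) {V : Set (Brandt S lam)} (hV : none ∉ V) :
    sheetTrace β γ (brandtIncl α ⁻¹' V) = brandtSandwich α β γ α ⁻¹' V := by
  ext x
  by_cases hx : ∃ s : {s : S // s ≠ 0}, x = some (β, s, γ)
  · obtain ⟨s, rfl⟩ := hx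
    rw [mem_preimage, brandtSandwich_some, ← brandtIncl_coe]
    refine ⟨?_, fun hs => ⟨s, hs, rfl⟩⟩
    rintro ⟨t, ht, h⟩
    cases h
    exact ht
  · simp only [not_exists] at hx
    simp only [mem_preimage, brandtSandwich_of_ne α α hx, hV, iff_false]
    rintro ⟨s, -, rfl⟩
    exact hx s rfl

theorem UA0_univ_preimage_brandtIncl (α : lam) {V : Set (Brandt S lam)} (hV : none ∈ V) :
    UA0 univ (brandtIncl α ⁻¹' V) = ⋂ p : lam × lam, brandtSandwich α p.1 p.2 α ⁻¹' V := by
  ext x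
  simp only [mem_iInter, mem_preimage]
  constructor
  · rintro (rfl | ⟨β, γ, s, rfl, hs | hs⟩) ⟨β', γ'⟩
    · simpa [brandtSandwich_of_ne α α (x := none) (by simp)] using hV
    · exact (hs (mem_univ _)).elim
    · by_cases h : β' = β ∧ γ' = γ
      · obtain ⟨rfl, rfl⟩ := h
        simpa [brandtSandwich_some, brandtIncl_coe] using hs
      · rw [brandtSandwich_of_ne α α fun t ht => h (by cases ht; exact ⟨rfl, rfl⟩)]
        exact hV
  · rcases x with _ | ⟨β, s, γ⟩
    · exact fun _ => Or.inl rfl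
    · intro hx
      have := hx (β, γ)
      rw [brandtSandwich_some] at this
      exact Or.inr ⟨β, γ, s, rfl, Or.inr (by simpa [brandtIncl_coe] using this)⟩

end Sandwich

theorem brandt_finite_open_general {S lam : Type*} [MonoidWithZero S] [TopologicalSpace S]
    [Finite lam]
    [tB : TopologicalSpace (Brandt S lam)]
    (hsep : SepCont (brandtMul (S := S) (lam := lam)))
    (alpha : lam) (hemb : Topology.IsEmbedding (brandtIncl (S := S) (lam := lam) alpha)) :
    ∀ A : Set S, IsOpen A →
      (((0 : S) ∉ A → ∀ β γ : lam, IsOpen (sheetTrace (lam := lam) β γ A)) ∧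
       ((0 : S) ∈ A → IsOpen (UA0 (Set.univ : Set (lam × lam)) A))) := by
  intro A hA
  rcases subsingleton_or_nontrivial S with _ | _
  · exact ⟨fun _ _ _ => isOpen_discrete _, fun _ => isOpen_discrete _⟩
  obtain ⟨V, hV, rfl⟩ := hemb.isInducing.isOpen_iff.mp hA
  have hzero : (0 : S) ∈ brandtIncl alpha ⁻¹' V ↔ none ∈ V := by
    rw [mem_preimage, brandtIncl_zero]
  refine ⟨fun h0 β γ => ?_, fun h0 => ?_⟩
  · rw [sheetTrace_preimage_brandtIncl alpha β γ (hzero.not.mp h0)]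
    exact hV.preimage (continuous_brandtSandwich hsep _ _ _ _)
  · rw [UA0_univ_preimage_brandtIncl alpha (hzero.mp h0)]
    exact isOpen_iInter_of_finite fun p => hV.preimage (continuous_brandtSandwich hsep _ _ _ _)

/-- For finite `λ`: open subsets of `S` not containing `0_S` give open sheets, and open
subsets containing `0_S` give open unions over all sheets. -/
theorem brandt_finite_open {S lam : Type*} [MonoidWithZero S] [TopologicalSpace S]
    [T2Space S] [Finite lam] [Nonempty lam]
    [tB : TopologicalSpace (Brandt S lam)] [T2Space (Brandt S lam)]
    (hsep : SepCont (brandtMul (S := S) (lam := lam)))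
    (hS : ∀ t : S, Continuous (fun x => t * x) ∧ Continuous (fun x => x * t))
    (alpha : lam) (hemb : Topology.IsEmbedding (brandtIncl (S := S) (lam := lam) alpha)) :
    ∀ A : Set S, IsOpen A →
      (((0 : S) ∉ A → ∀ β γ : lam, IsOpen (sheetTrace (lam := lam) β γ A)) ∧
       ((0 : S) ∈ A → IsOpen (UA0 (Set.univ : Set (lam × lam)) A))) :=
  brandt_finite_open_general (tB := tB) hsep alpha hemb
end

section
/- Let S be a countably compact Hausdorff semitopological monoid with zero and let λ ≥ 1 be any cardinal. Then the Brandt λ⁰-extension B⁰_λ(S) endowed with the canonical topology τ_B^S (disjoint-sum topology on the nonzero part, cofinite-sheet neighbourhoods of zero) is a countably compact Hausdorff semitopological semigroup. -/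
open Topology Set Filter

/-!
An open set containing zero contains a basic neighbourhood `U_A(0)`, hence every sheet outside
the finite set `A`; the sheets indexed by `A`, together with zero, are continuous images of `S`
and so countably compact. A countable open cover of `B⁰_λ(S)` therefore has a finite subcover:
one member containing zero, and finitely many members covering those sheets.

Translation by a nonzero element `(α, a, β)` moves the sheet `(β, δ)` to `(α, δ)` through
`s ↦ a * s` and kills all other sheets; continuity of all maps of this shape follows from the
separate continuity of multiplication in `S` by computing preimages of basic open sets.
-/

theorem countablyCompactSp_iff_isCountablyCompact_univ {X : Type*} [TopologicalSpace X] :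
    CountablyCompactSp X ↔ IsCountablyCompact (univ : Set X) := by
  constructor
  · intro h
    rw [isCountablyCompact_iff_countable_open_cover']
    intro U hUo hcover
    have hsub : ∃ G ⊆ U '' univ, G.Finite ∧ ⋃₀ G = univ := by
      rw [image_univ]
      exact h (range U) (countable_range U) (forall_mem_range.2 hUo)
        (univ_subset_iff.1 (by rwa [sUnion_range]))
    obtain ⟨t, -, htfin, ht⟩ := exists_subset_image_finite_and.1 hsub
    exact ⟨t, htfin, by rw [← sUnion_image, ht]⟩
  · intro h F hFc hFo hcover
    obtain ⟨t, htF, htfin, ht⟩ := h.elim_finite_subcover_image (U := id) hFc hFo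
      (by simp only [id, ← sUnion_eq_biUnion, hcover, subset_rfl])
    exact ⟨t, htF, htfin, univ_subset_iff.1 (by rwa [sUnion_eq_biUnion])⟩

attribute [local instance] brandtTop

namespace Brandt

section Zero

variable {S : Type*} [Zero S] {lam : Type*}

open Classical in
noncomputable def single (α β : lam) (s : S) : Brandt S lam :=
  if h : s = 0 then none else some (α, ⟨s, h⟩, β)

@[simp] lemma single_zero (α β : lam) : single α β (0 : S) = none := by
  simp [single]

lemma single_of_ne_zero (α β : lam) {s : S} (hs : s ≠ 0) :
    single α β s = some (α, ⟨s, hs⟩, β) := by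
  simp [single, hs]

@[simp] lemma single_coe (α β : lam) (s : {s : S // s ≠ 0}) :
    single α β s.1 = some (α, s, β) :=
  single_of_ne_zero α β s.2

lemma mem_sheetTrace_some {α β γ δ : lam} {s : {s : S // s ≠ 0}} {U : Set S} :
    some (α, s, β) ∈ sheetTrace γ δ U ↔ α = γ ∧ β = δ ∧ s.1 ∈ U := by
  constructor
  · rintro ⟨t, ht, h⟩
    obtain ⟨rfl, rfl, rfl⟩ : α = γ ∧ s = t ∧ β = δ := by simpa [Prod.ext_iff] using h
    exact ⟨rfl, rfl, ht⟩
  · rintro ⟨rfl, rfl, hs⟩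
    exact ⟨s, hs, rfl⟩

@[simp] lemma none_notMem_sheetTrace {α β : lam} {U : Set S} :
    (none : Brandt S lam) ∉ sheetTrace α β U := by
  rintro ⟨s, -, h⟩
  simp at h

lemma mem_UA0_some {A : Set (lam × lam)} {U : Set S} {α β : lam} {s : {s : S // s ≠ 0}} :
    some (α, s, β) ∈ UA0 A U ↔ (α, β) ∉ A ∨ s.1 ∈ U := by
  constructor
  · rintro (h | ⟨γ, δ, t, h, ht⟩)
    · simp at h
    · obtain ⟨rfl, rfl, rfl⟩ : α = γ ∧ s = t ∧ β = δ := by simpa [Prod.ext_iff] using h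
      exact ht
  · exact fun h => Or.inr ⟨α, β, s, rfl, h⟩

@[simp] lemma none_mem_UA0 {A : Set (lam × lam)} {U : Set S} :
    (none : Brandt S lam) ∈ UA0 A U :=
  Or.inl rfl

lemma single_mem_sheetTrace {α β γ δ : lam} {s : S} {U : Set S} :
    single α β s ∈ sheetTrace γ δ U ↔ α = γ ∧ β = δ ∧ s ∈ U \ {0} := by
  by_cases hs : s = 0
  · simp [hs]
  · simp [single_of_ne_zero α β hs, mem_sheetTrace_some, hs]

lemma single_mem_UA0 {A : Set (lam × lam)} {U : Set S} (h0 : (0 : S) ∈ U) {α β : lam}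
    {s : S} : single α β s ∈ UA0 A U ↔ (α, β) ∉ A ∨ s ∈ U := by
  by_cases hs : s = 0
  · simp [hs, h0]
  · rw [single_of_ne_zero α β hs, mem_UA0_some]

lemma mem_UA0_or_mem_range_single (A : Set (lam × lam)) (U : Set S) (x : Brandt S lam) :
    x ∈ UA0 A U ∨ x ∈ ⋃ i ∈ A, range (single i.1 i.2) := by
  rcases x with _ | ⟨α, s, β⟩
  · exact Or.inl none_mem_UA0
  · by_cases hA : (α, β) ∈ A
    · exact Or.inr (mem_biUnion hA ⟨s.1, single_coe α β s⟩)
    · exact Or.inl (mem_UA0_some.2 (Or.inl hA))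

lemma UA0_union_inter_subset (A₁ A₂ : Set (lam × lam)) (U₁ U₂ : Set S) :
    UA0 (A₁ ∪ A₂) (U₁ ∩ U₂) ⊆ UA0 A₁ U₁ ∩ UA0 A₂ U₂ := by
  rintro (_ | ⟨α, s, β⟩) hx
  · exact ⟨none_mem_UA0, none_mem_UA0⟩
  · simp only [mem_inter_iff, mem_UA0_some, mem_union, not_or] at hx ⊢
    tauto

/-- Sends `(γ, s, δ)` to `φ s` placed on the sheet `σ (γ, δ)`; the result is zero where
`σ (γ, δ) = none` or `φ s = 0`. -/
noncomputable def sheetMap (σ : lam × lam → Option (lam × lam)) (φ : S → S)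
    (x : Brandt S lam) : Brandt S lam :=
  x.bind fun a => (σ (a.1, a.2.2)).bind fun i => single i.1 i.2 (φ a.2.1)

@[simp] lemma sheetMap_none (σ : lam × lam → Option (lam × lam)) (φ : S → S) :
    sheetMap σ φ none = none :=
  rfl

lemma sheetMap_some (σ : lam × lam → Option (lam × lam)) (φ : S → S) (α β : lam)
    (s : {s : S // s ≠ 0}) :
    sheetMap σ φ (some (α, s, β)) = (σ (α, β)).bind fun i => single i.1 i.2 (φ s.1) :=
  rfl

lemma preimage_sheetMap_sheetTrace (σ : lam × lam → Option (lam × lam)) (φ : S → S)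
    (α β : lam) (U : Set S) :
    sheetMap σ φ ⁻¹' sheetTrace α β U =
      ⋃ i ∈ σ ⁻¹' {some (α, β)}, sheetTrace i.1 i.2 (φ ⁻¹' (U \ {0})) := by
  ext (_ | ⟨γ, s, δ⟩)
  · simp
  · simp only [mem_preimage, sheetMap_some, mem_iUnion, mem_sheetTrace_some, exists_prop,
      mem_singleton_iff, Prod.exists]
    cases hσ : σ (γ, δ) with
    | none => simp [hσ]
    | some i => simp [hσ, single_mem_sheetTrace, Prod.ext_iff, and_assoc]

lemma preimage_sheetMap_UA0 (σ : lam × lam → Option (lam × lam)) (φ : S → S)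
    (A : Set (lam × lam)) {U : Set S} (h0 : (0 : S) ∈ U) :
    sheetMap σ φ ⁻¹' UA0 A U = UA0 (σ ⁻¹' (some '' A)) (φ ⁻¹' U) := by
  ext (_ | ⟨γ, s, δ⟩)
  · simp
  · simp only [mem_preimage, sheetMap_some, mem_UA0_some]
    cases hσ : σ (γ, δ) with
    | none => simp
    | some i => simp [single_mem_UA0 h0]

lemma disjoint_sheetTrace_of_ne {α β γ δ : lam} (h : (α, β) ≠ (γ, δ)) (U V : Set S) :
    Disjoint (sheetTrace α β U : Set (Brandt S lam)) (sheetTrace γ δ V) := by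
  rw [disjoint_left]
  rintro _ ⟨s, -, rfl⟩ hs
  obtain ⟨rfl, rfl, -⟩ := mem_sheetTrace_some.1 hs
  exact h rfl

lemma disjoint_sheetTrace {U V : Set S} (h : Disjoint U V) (α β : lam) :
    Disjoint (sheetTrace α β U : Set (Brandt S lam)) (sheetTrace α β V) := by
  rw [disjoint_left]
  rintro _ ⟨s, hsU, rfl⟩ hs
  exact disjoint_left.1 h hsU (mem_sheetTrace_some.1 hs).2.2

lemma disjoint_sheetTrace_UA0 {U V : Set S} (h : Disjoint U V) (α β : lam) :
    Disjoint (sheetTrace α β U : Set (Brandt S lam)) (UA0 {(α, β)} V) := by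
  rw [disjoint_left]
  rintro _ ⟨s, hsU, rfl⟩ hs
  exact (mem_UA0_some.1 hs).elim (· rfl) (disjoint_left.1 h hsU)

end Zero

section Topology

variable {S : Type*} [Zero S] [TopologicalSpace S] {lam : Type*}

lemma isOpen_sheetTrace (α β : lam) {U : Set S} (hU : IsOpen U) :
    IsOpen (sheetTrace α β U : Set (Brandt S lam)) :=
  TopologicalSpace.isOpen_generateFrom_of_mem (Or.inl ⟨α, β, U, hU, rfl⟩)

lemma isOpen_UA0 {A : Set (lam × lam)} (hA : A.Finite) {U : Set S} (hU : IsOpen U)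
    (h0 : (0 : S) ∈ U) : IsOpen (UA0 A U : Set (Brandt S lam)) :=
  TopologicalSpace.isOpen_generateFrom_of_mem (Or.inr ⟨A, hA, U, hU, h0, rfl⟩)

lemma exists_UA0_subset {W : Set (Brandt S lam)} (hW : IsOpen W) (h0 : none ∈ W) :
    ∃ (A : Set (lam × lam)) (U : Set S), A.Finite ∧ IsOpen U ∧ (0 : S) ∈ U ∧ UA0 A U ⊆ W := by
  induction hW with
  | basic V hV =>
    rcases hV with ⟨α, β, U, hU, rfl⟩ | ⟨A, hA, U, hU, h0U, rfl⟩
    · exact absurd h0 none_notMem_sheetTrace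
    · exact ⟨A, U, hA, hU, h0U, subset_rfl⟩
  | univ => exact ⟨∅, univ, finite_empty, isOpen_univ, mem_univ _, subset_univ _⟩
  | inter V₁ V₂ _ _ ih₁ ih₂ =>
    obtain ⟨A₁, U₁, hA₁, hU₁, h₁, hV₁⟩ := ih₁ h0.1
    obtain ⟨A₂, U₂, hA₂, hU₂, h₂, hV₂⟩ := ih₂ h0.2
    exact ⟨A₁ ∪ A₂, U₁ ∩ U₂, hA₁.union hA₂, hU₁.inter hU₂, ⟨h₁, h₂⟩,
      (UA0_union_inter_subset A₁ A₂ U₁ U₂).trans (inter_subset_inter hV₁ hV₂)⟩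
  | sUnion 𝒱 _ ih =>
    obtain ⟨V, hV, h0V⟩ := h0
    obtain ⟨A, U, hA, hU, h0U, hAU⟩ := ih V hV h0V
    exact ⟨A, U, hA, hU, h0U, hAU.trans (subset_sUnion_of_mem hV)⟩

lemma exists_open_separating_some_none [T2Space S] (α β : lam) (s : {s : S // s ≠ 0}) :
    ∃ W W₀ : Set (Brandt S lam), IsOpen W ∧ IsOpen W₀ ∧ some (α, s, β) ∈ W ∧ none ∈ W₀ ∧
      Disjoint W W₀ := by
  obtain ⟨U, V, hU, hV, hsU, h0V, hUV⟩ := t2_separation s.2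
  exact ⟨_, _, isOpen_sheetTrace α β hU, isOpen_UA0 (finite_singleton _) hV h0V,
    mem_sheetTrace_some.2 ⟨rfl, rfl, hsU⟩, none_mem_UA0, disjoint_sheetTrace_UA0 hUV α β⟩

theorem t2Space [T2Space S] : T2Space (Brandt S lam) := by
  refine ⟨?_⟩
  rintro (_ | ⟨α, s, β⟩) (_ | ⟨γ, t, δ⟩) hne
  · exact absurd rfl hne
  · obtain ⟨W, W₀, hW, hW₀, hxW, h0W₀, hd⟩ := exists_open_separating_some_none γ δ t
    exact ⟨W₀, W, hW₀, hW, h0W₀, hxW, hd.symm⟩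
  · exact exists_open_separating_some_none α β s
  · by_cases hi : (α, β) = (γ, δ)
    · obtain ⟨rfl, rfl⟩ := Prod.ext_iff.1 hi
      have hst : s.1 ≠ t.1 := fun h => hne (by rw [Subtype.ext h])
      obtain ⟨U, V, hU, hV, hsU, htV, hUV⟩ := t2_separation hst
      exact ⟨_, _, isOpen_sheetTrace α β hU, isOpen_sheetTrace α β hV,
        mem_sheetTrace_some.2 ⟨rfl, rfl, hsU⟩, mem_sheetTrace_some.2 ⟨rfl, rfl, htV⟩,
        disjoint_sheetTrace hUV α β⟩
    · exact ⟨_, _, isOpen_sheetTrace α β isOpen_univ, isOpen_sheetTrace γ δ isOpen_univ,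
        mem_sheetTrace_some.2 ⟨rfl, rfl, mem_univ _⟩,
        mem_sheetTrace_some.2 ⟨rfl, rfl, mem_univ _⟩,
        disjoint_sheetTrace_of_ne hi univ univ⟩

variable [T1Space S]

lemma continuous_single (α β : lam) : Continuous (single α β : S → Brandt S lam) := by
  refine continuous_generateFrom_iff.2 ?_
  rintro W (⟨γ, δ, U, hU, rfl⟩ | ⟨A, -, U, hU, h0, rfl⟩)
  · by_cases h : α = γ ∧ β = δ
    · obtain ⟨rfl, rfl⟩ := h
      have hpre : single α β ⁻¹' sheetTrace α β U = U \ {0} := by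
        ext s
        simp [single_mem_sheetTrace]
      exact hpre ▸ hU.sdiff isClosed_singleton
    · convert isOpen_empty
      ext s
      simp only [mem_preimage, single_mem_sheetTrace, mem_empty_iff_false, iff_false]
      tauto
  · by_cases h : (α, β) ∈ A
    · convert hU using 1
      ext s
      simp [single_mem_UA0 h0, h]
    · convert isOpen_univ
      ext s
      simp [single_mem_UA0 h0, h]

lemma continuous_sheetMap {σ : lam × lam → Option (lam × lam)}
    (hσ : ∀ i, (σ ⁻¹' {some i}).Finite) {φ : S → S} (hφ : Continuous φ) (hφ0 : φ 0 = 0) :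
    Continuous (sheetMap σ φ : Brandt S lam → Brandt S lam) := by
  refine continuous_generateFrom_iff.2 ?_
  rintro W (⟨α, β, U, hU, rfl⟩ | ⟨A, hA, U, hU, h0, rfl⟩)
  · rw [preimage_sheetMap_sheetTrace]
    exact isOpen_biUnion fun i _ =>
      isOpen_sheetTrace i.1 i.2 ((hU.sdiff isClosed_singleton).preimage hφ)
  · rw [preimage_sheetMap_UA0 σ φ A h0]
    refine isOpen_UA0 ((hA.image some).preimage' ?_) (hU.preimage hφ)
      (by rwa [mem_preimage, hφ0])
    rintro _ ⟨i, -, rfl⟩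
    exact hσ i

theorem isCountablyCompact_univ (hS : IsCountablyCompact (univ : Set S)) :
    IsCountablyCompact (univ : Set (Brandt S lam)) := by
  rw [isCountablyCompact_iff_countable_open_cover]
  intro W hWo hcover
  obtain ⟨n, hn⟩ := mem_iUnion.1 (hcover (mem_univ none))
  obtain ⟨A, U, hA, -, -, hAU⟩ := exists_UA0_subset (hWo n) hn
  have hsheets : IsCountablyCompact (⋃ i ∈ A, range (single i.1 i.2 : S → Brandt S lam)) :=
    hA.isCountablyCompact_biUnion fun i _ => by
      rw [← image_univ]
      exact hS.image (continuous_single i.1 i.2)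
  obtain ⟨t, ht⟩ := hsheets.elim_finite_subcover hWo ((subset_univ _).trans hcover)
  refine ⟨insert n t, fun x _ => ?_⟩
  rw [Finset.set_biUnion_insert]
  rcases mem_UA0_or_mem_range_single A U x with hx | hx
  · exact Or.inl (hAU hx)
  · exact Or.inr (ht hx)

end Topology

section Mul

variable {S : Type*} [MonoidWithZero S] {lam : Type*}

lemma brandtMul_none_left : brandtMul (none : Brandt S lam) = fun _ => none := by
  funext x
  cases x <;> rfl

lemma brandtMul_none_right : (fun x : Brandt S lam => brandtMul x none) = fun _ => none := by
  funext x
  cases x <;> rfl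

open Classical in
lemma brandtMul_some_left (α β : lam) (a : {s : S // s ≠ 0}) :
    brandtMul (some (α, a, β)) =
      sheetMap (fun i => if i.1 = β then some (α, i.2) else none) (a.1 * ·) := by
  funext x
  rcases x with _ | ⟨γ, b, δ⟩
  · rfl
  · by_cases hγ : γ = β
    · subst hγ
      by_cases hab : a.1 * b.1 = 0
      · simp [brandtMul, sheetMap_some, hab]
      · simp [brandtMul, sheetMap_some, hab, single_of_ne_zero]
    · simp [brandtMul, sheetMap_some, hγ, Ne.symm hγ]

open Classical in
lemma brandtMul_some_right (α β : lam) (a : {s : S // s ≠ 0}) :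
    (fun x => brandtMul x (some (α, a, β))) =
      sheetMap (fun i => if i.2 = α then some (i.1, β) else none) (· * a.1) := by
  funext x
  rcases x with _ | ⟨γ, b, δ⟩
  · rfl
  · by_cases hδ : δ = α
    · subst hδ
      by_cases hba : b.1 * a.1 = 0
      · simp [brandtMul, sheetMap_some, hba]
      · simp [brandtMul, sheetMap_some, hba, single_of_ne_zero]
    · simp [brandtMul, sheetMap_some, hδ]

variable [TopologicalSpace S] [T1Space S]

theorem continuous_brandtMul_left (hsep : SepCont (fun x y : S => x * y)) (t : Brandt S lam) :
    Continuous (brandtMul t) := by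
  rcases t with _ | ⟨α, a, β⟩
  · exact brandtMul_none_left (S := S) ▸ continuous_const
  · rw [brandtMul_some_left]
    refine continuous_sheetMap (fun q => (finite_singleton (β, q.2)).subset ?_) (hsep a.1).1
      (mul_zero a.1)
    rintro ⟨γ, δ⟩ h
    simp only [mem_preimage, mem_singleton_iff] at h
    split_ifs at h with hγ
    obtain rfl := Option.some_injective _ h
    simp [hγ]

theorem continuous_brandtMul_right (hsep : SepCont (fun x y : S => x * y)) (t : Brandt S lam) :
    Continuous (fun x => brandtMul x t) := by
  rcases t with _ | ⟨α, a, β⟩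
  · exact brandtMul_none_right (S := S) ▸ continuous_const
  · rw [brandtMul_some_right]
    refine continuous_sheetMap (fun q => (finite_singleton (q.1, α)).subset ?_) (hsep a.1).2
      (zero_mul a.1)
    rintro ⟨γ, δ⟩ h
    simp only [mem_preimage, mem_singleton_iff] at h
    split_ifs at h with hδ
    obtain rfl := Option.some_injective _ h
    simp [hδ]

end Mul

end Brandt

theorem brandt_countablyCompact_general {S lam : Type*} [MonoidWithZero S] [TopologicalSpace S]
    [T2Space S] (hsep : SepCont (fun x y : S => x * y))
    (hcc : CountablyCompactSp S) :
    @CountablyCompactSp (Brandt S lam) (brandtTop S lam) ∧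
    @T2Space (Brandt S lam) (brandtTop S lam) ∧
    (∀ t : Brandt S lam,
      Continuous[brandtTop S lam, brandtTop S lam] (brandtMul t) ∧
      Continuous[brandtTop S lam, brandtTop S lam] (fun x => brandtMul x t)) :=
  ⟨countablyCompactSp_iff_isCountablyCompact_univ.2
      (Brandt.isCountablyCompact_univ (countablyCompactSp_iff_isCountablyCompact_univ.1 hcc)),
    Brandt.t2Space,
    fun t => ⟨Brandt.continuous_brandtMul_left hsep t, Brandt.continuous_brandtMul_right hsep t⟩⟩

/-- For a countably compact Hausdorff semitopological monoid `S` with zero, the Brandt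
extension with the canonical topology `τ_B^S` is a countably compact Hausdorff
semitopological semigroup. -/
theorem brandt_countablyCompact {S lam : Type*} [MonoidWithZero S] [TopologicalSpace S]
    [T2Space S] [Nonempty lam] (hsep : SepCont (fun x y : S => x * y))
    (hcc : CountablyCompactSp S) :
    @CountablyCompactSp (Brandt S lam) (brandtTop S lam) ∧
    @T2Space (Brandt S lam) (brandtTop S lam) ∧
    (∀ t : Brandt S lam,
      Continuous[brandtTop S lam, brandtTop S lam] (brandtMul t) ∧
      Continuous[brandtTop S lam, brandtTop S lam] (fun x => brandtMul x t)) :=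
  brandt_countablyCompact_general hsep hcc
end
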